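/- Let k be a field of prime characteristic p, U a k-vector space, and φ : U → U a k-linear map with φ^p = 0. Let Sym(φ) : Sym(U) → Sym(U) be the induced algebra endomorphism of the symmetric algebra. Then the p-fold composition (id ⋆ Sym(φ))^p equals the identity of Sym(U), where ⋆ is convolution with respect to the standard bialgebra structure on Sym(U). -/
import Mathlib


open scoped TensorProduct

variable {k S : Type*}

/-- Convolution of linear endomorphisms with respect to a comultiplication `Δ`:
`u ⋆ v = m ∘ (u ⊗ v) ∘ Δ`. -/
noncomputable def convWith [CommRing k] [CommRing S] [Algebra k S]
    (Δ : S →ₐ[k] S ⊗[k] S) (u v : S →ₗ[k] S) : S →ₗ[k] S :=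
  (LinearMap.mul' k S).comp ((TensorProduct.map u v).comp Δ.toLinearMap)

/-- Let `k` be a field of characteristic `p`, `U` a `k`-vector space and `φ : U → U`
with `φ^p = 0`.  On the symmetric algebra `S = Sym(U)` (modelled by a commutative
`k`-algebra `S` together with `ι : U →ₗ[k] S` whose products of images span `S`,
equipped with its standard bialgebra comultiplication `Δ`, characterised by the
elements `ι x` being primitive), the algebra endomorphism `Sym(φ)` (characterised
by `Sym(φ)(ι x) = ι (φ x)`) satisfies `(id ⋆ Sym(φ))^p = id`. -/
theorem troesch_stmt5 [Field k] (p : ℕ) [Fact p.Prime] [CharP k p]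
    (U : Type*) [AddCommGroup U] [Module k U]
    (φ : U →ₗ[k] U) (hφ : φ ^ p = 0)
    [CommRing S] [Algebra k S] (ι : U →ₗ[k] S)
    (hspan : Submodule.span k
      {s : S | ∃ (n : ℕ) (x : Fin n → U), s = ∏ i, ι (x i)} = ⊤)
    (Δ : S →ₐ[k] S ⊗[k] S)
    (hΔ : ∀ x : U, Δ (ι x) = ι x ⊗ₜ[k] 1 + 1 ⊗ₜ[k] ι x)
    (Sφ : S →ₐ[k] S) (hSφ : ∀ x : U, Sφ (ι x) = ι (φ x)) :
    (convWith Δ LinearMap.id Sφ.toLinearMap : Module.End k S) ^ p = 1 := by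
  -- the convolution is an algebra homomorphism
  set F : S →ₐ[k] S :=
    ((Algebra.TensorProduct.lmul' k).comp
      ((Algebra.TensorProduct.map (AlgHom.id k S) Sφ).comp Δ)) with hF
  have hconv : convWith Δ LinearMap.id Sφ.toLinearMap = F.toLinearMap := by
    unfold convWith
    ext s
    rfl
  -- F on generators
  have hFι : ∀ x : U, F (ι x) = ι ((1 + φ) x) := by
    intro x
    simp [hF, hΔ x, hSφ x, map_add]
  -- powers of F on generators
  have hFn : ∀ (n : ℕ) (x : U), (F ^ n) (ι x) = ι (((1 + φ) ^ n) x) := by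
    intro n
    induction n with
    | zero => intro x; simp
    | succ n ih =>
      intro x
      rw [pow_succ, pow_succ]
      have : (F ^ n * F) (ι x) = (F ^ n) (F (ι x)) := rfl
      rw [this, hFι, ih]
      rfl
  -- (1+φ)^p = 1 pointwise
  have h1p : ∀ u : U, ((1 + φ) ^ p) u = u := by
    intro u
    have hc : Commute (1 : Module.End k U) φ := Commute.one_left φ
    rw [hc.add_pow, Finset.sum_range_succ]
    have hzero : (∑ m ∈ Finset.range p,
        (1 : Module.End k U) ^ m * φ ^ (p - m) * (p.choose m : Module.End k U)) = 0 := by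
      apply Finset.sum_eq_zero
      intro m hm
      rcases Nat.eq_zero_or_pos m with h0 | h0
      · subst h0; simp [hφ]
      · have hdvd : p ∣ p.choose m :=
          Nat.Prime.dvd_choose_self (Fact.out) h0.ne' (Finset.mem_range.mp hm)
        have hk0 : ((p.choose m : ℕ) : k) = 0 := (CharP.cast_eq_zero_iff k p _).mpr hdvd
        have : ((p.choose m : ℕ) : Module.End k U) =
            algebraMap k (Module.End k U) ((p.choose m : ℕ) : k) := by
          rw [map_natCast]
        rw [this, hk0, map_zero, mul_zero]
    rw [hzero]
    simp
  have hFp : ∀ x : U, (F ^ p) (ι x) = ι x := fun x => by rw [hFn, h1p]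
  -- F^p = identity on all of S
  have key : ∀ s : S, (F ^ p) s = s := by
    intro s
    have hs : s ∈ Submodule.span k {s : S | ∃ (n : ℕ) (x : Fin n → U), s = ∏ i, ι (x i)} := by
      rw [hspan]; trivial
    induction hs using Submodule.span_induction with
    | mem s hs =>
      obtain ⟨n, x, rfl⟩ := hs
      rw [map_prod]
      exact Finset.prod_congr rfl fun i _ => hFp (x i)
    | zero => simp
    | add a b _ _ ha hb => rw [map_add, ha, hb]
    | smul c a _ ha => rw [map_smul, ha]
  -- transfer to Module.End powers
  have hpow : ∀ (n : ℕ) (s : S),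
      ((F.toLinearMap : Module.End k S) ^ n) s = (F ^ n) s := by
    intro n
    induction n with
    | zero => intro s; rfl
    | succ n ih =>
      intro s
      rw [pow_succ, pow_succ]
      have h1 : ((F.toLinearMap : Module.End k S) ^ n * F.toLinearMap) s
          = ((F.toLinearMap : Module.End k S) ^ n) (F s) := rfl
      have h2 : (F ^ n * F) s = (F ^ n) (F s) := rfl
      rw [h1, h2, ih]
  rw [hconv]
  ext s
  rw [hpow p s, key s]
  rfl
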